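/- Let R = F[[π]] be the power series ring over a finite field F with |F| > 3 and maximal ideal p. The only closed normal subgroup N of SL(2,R) such that SL(2,R)/N is simple is N = {A ∈ SL(2,R) : A ≡ ±I mod p}. -/

import Mathlib

/-!
Let `ρ : SL(2, F⟦X⟧) → SL(2, F)` be reduction mod `X` and `M = ρ⁻¹ {±1}`. Because the quotient
by `N` is simple, a normal subgroup either lies in `N` or maps onto the quotient. Closedness of
`N` puts some congruence subgroup `Γ(X ^ k)` inside `N`. If `M` were not in `N`, the quotient
would be an image of `M`; since `⁅M, M⁆ ≤ Γ(X)` and `⁅Γ(J), Γ(J)⁆ ≤ Γ(J ^ 2)`, its derived series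
reaches the image of `Γ(X ^ k)`, which is trivial, so the quotient would be solvable. But
`SL(2, F⟦X⟧)` is perfect (every elementary matrix is a commutator with a constant diagonal
matrix, and elementary matrices generate `SL(2)` of a local ring). So `M ≤ N`. Conversely,
`ρ(N)` is normal in `SL(2, F)`; if it were not central, simplicity of `PSL(2, F)` for `|F| ≥ 4`
and perfectness of `SL(2, F)` would give `ρ(N) = SL(2, F)`, and with `ker ρ ≤ M ≤ N` this would
make `N` everything.
-/

open Matrix Subgroup
open scoped commutatorElement MatrixGroups

section GroupTheory

variable {G H : Type*} [Group G] [Group H]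

theorem Subgroup.le_or_map_mk'_eq_top {N : Subgroup G} [N.Normal] [IsSimpleGroup (G ⧸ N)]
    (K : Subgroup G) [K.Normal] : K ≤ N ∨ K.map (QuotientGroup.mk' N) = ⊤ := by
  have : (K.map (QuotientGroup.mk' N)).Normal := .map ‹_› _ (QuotientGroup.mk'_surjective N)
  refine this.eq_bot_or_eq_top.imp (fun h ↦ ?_) id
  rwa [map_eq_bot_iff, QuotientGroup.ker_mk'] at h

theorem Subgroup.exists_mem_inv_mul_mem_of_map_mk'_eq_top {N K : Subgroup G} [N.Normal]
    (hK : K.map (QuotientGroup.mk' N) = ⊤) (g : G) : ∃ k ∈ K, k⁻¹ * g ∈ N := by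
  obtain ⟨k, hk, hkg⟩ := hK.ge (mem_top (g : G ⧸ N))
  exact ⟨k, hk, QuotientGroup.eq.1 hkg⟩

theorem commutatorElement_mul_central_left {h z : G} (hz : z ∈ center G) (g : G) :
    ⁅h * z, g⁆ = ⁅h, g⁆ := by
  have hzg : g * z = z * g := mem_center_iff.1 hz g
  rw [commutatorElement_def, commutatorElement_def, _root_.mul_inv_rev,
    show h * z * g * (z⁻¹ * h⁻¹) = h * g * h⁻¹ by rw [mul_assoc h z g, ← hzg]; group]

theorem Subgroup.eq_top_of_not_le_center [Group.IsPerfect G] [IsSimpleGroup (G ⧸ center G)]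
    {K : Subgroup G} [K.Normal] (hK : ¬ K ≤ center G) : K = ⊤ := by
  have hmap := (K.le_or_map_mk'_eq_top (N := center G)).resolve_left hK
  rw [eq_top_iff, ← Group.isPerfect_def.1 ‹_›, _root_.commutator_def, commutator_le]
  intro g _ g' _
  obtain ⟨k, hk, hkg⟩ := exists_mem_inv_mul_mem_of_map_mk'_eq_top hmap g
  rw [← mul_inv_cancel_left k g, commutatorElement_mul_central_left hkg]
  exact commutator_le_left K ⊤ (commutator_mem_commutator hk (mem_top g'))

theorem Subgroup.le_comap_center_of_ker_le [Group.IsPerfect H] [IsSimpleGroup (H ⧸ center H)]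
    {f : G →* H} (hf : Function.Surjective f) {N : Subgroup G} [N.Normal] (hN : N ≠ ⊤)
    (hker : f.ker ≤ N) : N ≤ (center H).comap f := by
  rw [← map_le_iff_le_comap]
  by_contra hle
  have : (N.map f).Normal := .map ‹_› f hf
  exact hN (by rw [← comap_map_eq_self hker, eq_top_of_not_le_center hle, comap_top])

theorem Subgroup.commutator_comap_center_le_ker (f : G →* H) :
    ⁅(center H).comap f, (center H).comap f⁆ ≤ f.ker := by
  rw [commutator_le]
  intro g hg g' _
  rw [MonoidHom.mem_ker, map_commutatorElement, commutatorElement_eq_one_iff_commute]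
  exact (mem_center_iff.1 hg (f g')).symm

theorem Group.isSolvable_of_map_eq_top (f : G →* H) {L : Subgroup G} (hL : L.map f = ⊤)
    (K : ℕ → Subgroup G) (hL' : ⁅L, L⁆ ≤ K 0) (hK : ∀ j, ⁅K j, K j⁆ ≤ K (j + 1)) {m : ℕ}
    (hm : K m ≤ f.ker) : Group.IsSolvable H := by
  have key : ∀ j, derivedSeries H (j + 1) ≤ (K j).map f := by
    intro j
    induction j with
    | zero =>
      rw [derivedSeries_succ, derivedSeries_zero, ← hL, ← map_commutator]
      exact map_mono hL'
    | succ j ih =>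
      rw [derivedSeries_succ]
      exact (commutator_mono ih ih).trans (map_commutator _ _ f ▸ map_mono (hK j))
  exact ⟨m + 1, eq_bot_iff.2 ((key m).trans ((Subgroup.map_eq_bot_iff _).2 hm).le)⟩

end GroupTheory

section MatrixIdeal

variable {n A : Type*} [Fintype n] [DecidableEq n] [CommRing A]

theorem Ideal.mul_mem_matrix_mul {I J : Ideal A} {x y : Matrix n n A} (hx : x ∈ I.matrix n)
    (hy : y ∈ J.matrix n) : x * y ∈ (I * J).matrix n := fun i j ↦
  Ideal.sum_mem _ fun k _ ↦ Ideal.mul_mem_mul (hx i k) (hy k j)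

theorem Ideal.mul_mem_matrix_right {I : Ideal A} {x : Matrix n n A} (hx : x ∈ I.matrix n)
    (y : Matrix n n A) : x * y ∈ I.matrix n := by
  simpa using mul_mem_matrix_mul hx (show y ∈ (⊤ : Ideal A).matrix n by simp)

end MatrixIdeal

namespace Matrix.SpecialLinearGroup

section Congruence

variable {n A B : Type*} [Fintype n] [DecidableEq n] [CommRing A] [CommRing B]

theorem mem_ker_map_iff (f : A →+* B) (g : SpecialLinearGroup n A) :
    g ∈ (map f).ker ↔ (g : Matrix n n A) - 1 ∈ (RingHom.ker f).matrix n := by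
  rw [MonoidHom.mem_ker, SpecialLinearGroup.ext_iff]
  simp only [map_apply_coe, coe_one, Ideal.mem_matrix, RingHom.mem_ker, sub_apply, map_sub,
    RingHom.mapMatrix_apply, map_apply, sub_eq_zero]
  simp [one_apply, apply_ite f]

theorem map_surjective_of_comp_eq_id {f : A →+* B} (s : B →+* A)
    (hs : f.comp s = RingHom.id B) : Function.Surjective (map (n := n) f) := fun g ↦
  ⟨map s g, by ext; simp [← RingHom.comp_apply, hs]⟩

def congruenceSubgroup (I : Ideal A) : Subgroup (SpecialLinearGroup n A) :=
  (map (Ideal.Quotient.mk I)).ker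

instance (I : Ideal A) : (congruenceSubgroup (n := n) I).Normal :=
  MonoidHom.normal_ker _

theorem mem_congruenceSubgroup_iff {I : Ideal A} {g : SpecialLinearGroup n A} :
    g ∈ congruenceSubgroup I ↔ (g : Matrix n n A) - 1 ∈ I.matrix n := by
  rw [congruenceSubgroup, mem_ker_map_iff, Ideal.mk_ker]

theorem ker_map_eq_congruenceSubgroup (f : A →+* B) :
    (map f).ker = congruenceSubgroup (n := n) (RingHom.ker f) := by
  ext
  rw [mem_ker_map_iff, mem_congruenceSubgroup_iff]

theorem congruenceSubgroup_mono {I J : Ideal A} (h : I ≤ J) :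
    congruenceSubgroup (n := n) I ≤ congruenceSubgroup (n := n) J := fun _ hg ↦
  mem_congruenceSubgroup_iff.2 (Ideal.matrix_monotone n h (mem_congruenceSubgroup_iff.1 hg))

theorem commutator_congruenceSubgroup_le (I J : Ideal A) :
    ⁅congruenceSubgroup (n := n) I, congruenceSubgroup J⁆ ≤
      congruenceSubgroup (n := n) (I * J) := by
  rw [commutator_le]
  intro g hg h hh
  rw [mem_congruenceSubgroup_iff] at hg hh ⊢
  have key : ((⁅g, h⁆ : SpecialLinearGroup n A) : Matrix n n A) - 1 =
      ((g - 1) * (h - 1) - (h - 1) * (g - 1) : Matrix n n A) *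
        ((g⁻¹ * h⁻¹ : SpecialLinearGroup n A) : Matrix n n A) := by
    rw [show ((g - 1) * (h - 1) - (h - 1) * (g - 1) : Matrix n n A) = g * h - h * g by
      noncomm_ring, sub_mul, ← coe_mul, ← coe_mul, ← coe_mul, ← coe_mul,
      show h * g * (g⁻¹ * h⁻¹) = 1 by group, coe_one, commutatorElement_def,
      show g * h * g⁻¹ * h⁻¹ = g * h * (g⁻¹ * h⁻¹) by group]
  rw [key]
  refine Ideal.mul_mem_matrix_right (sub_mem (Ideal.mul_mem_matrix_mul hg hh) ?_) _
  rw [mul_comm I]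
  exact Ideal.mul_mem_matrix_mul hh hg

/-- `hN` says that `N` is closed in the `I`-adic topology. -/
theorem exists_congruenceSubgroup_pow_le {N : Subgroup (SpecialLinearGroup n A)} [N.Normal]
    [IsSimpleGroup (SpecialLinearGroup n A ⧸ N)] (I : Ideal A)
    (hN : ∀ g : SpecialLinearGroup n A,
      (∀ k : ℕ, ∃ h ∈ N, ∀ i j, (g : Matrix n n A) i j - (h : Matrix n n A) i j ∈ I ^ k) →
        g ∈ N) :
    ∃ k, congruenceSubgroup (I ^ k) ≤ N := by
  by_contra! hle
  refine QuotientGroup.nontrivial_iff.1 inferInstance (eq_top_iff.2 fun g _ ↦ hN g fun k ↦ ?_)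
  obtain ⟨h, hh, hhg⟩ := exists_mem_inv_mul_mem_of_map_mk'_eq_top
    ((le_or_map_mk'_eq_top _).resolve_left (hle k)) g
  refine ⟨h⁻¹ * g, hhg, fun i j ↦ ?_⟩
  have hsub : (g : Matrix n n A) - ↑(h⁻¹ * g) = -((↑h⁻¹ - 1) * g) := by
    rw [coe_mul]; noncomm_ring
  exact (hsub ▸ neg_mem (Ideal.mul_mem_matrix_right
    (mem_congruenceSubgroup_iff.1 (inv_mem hh)) (g : Matrix n n A))) i j

/-- Otherwise the simple quotient would be an image of `L`, hence solvable along the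
filtration `congruenceSubgroup (I ^ 2 ^ j)`, contradicting perfectness. -/
theorem le_of_commutator_le_congruenceSubgroup [Group.IsPerfect (SpecialLinearGroup n A)]
    {N : Subgroup (SpecialLinearGroup n A)} [N.Normal]
    [IsSimpleGroup (SpecialLinearGroup n A ⧸ N)] {I : Ideal A} {k : ℕ}
    (hk : congruenceSubgroup (I ^ k) ≤ N)
    {L : Subgroup (SpecialLinearGroup n A)} [L.Normal] (hL : ⁅L, L⁆ ≤ congruenceSubgroup I) :
    L ≤ N := by
  refine (le_or_map_mk'_eq_top L).resolve_right fun htop ↦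
    Group.IsPerfect.not_isSolvable (SpecialLinearGroup n A ⧸ N) ?_
  refine Group.isSolvable_of_map_eq_top _ htop (fun j ↦ congruenceSubgroup (I ^ 2 ^ j))
    (by simpa using hL) (fun j ↦ ?_) (m := k) ?_
  · rw [pow_succ, pow_mul, sq]
    exact commutator_congruenceSubgroup_le _ _
  · rw [QuotientGroup.ker_mk']
    exact (congruenceSubgroup_mono (Ideal.pow_le_pow_right Nat.lt_two_pow_self.le)).trans hk

end Congruence

section SL2

variable {A : Type*} [CommRing A]

theorem transvection_zero_one_coe (t : A) :
    (transvection (zero_ne_one' (Fin 2)) t : Matrix (Fin 2) (Fin 2) A) = !![1, t; 0, 1] := by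
  ext i j; fin_cases i <;> fin_cases j <;> simp [transvection_coe]

theorem transvection_one_zero_coe (t : A) :
    (transvection (one_ne_zero' (Fin 2)) t : Matrix (Fin 2) (Fin 2) A) = !![1, 0; t, 1] := by
  ext i j; fin_cases i <;> fin_cases j <;> simp [transvection_coe]

theorem det_fin_two_coe (g : SL(2, A)) : g 0 0 * g 1 1 - g 0 1 * g 1 0 = 1 := by
  rw [← det_fin_two, det_coe]

def diagUnit (u : Aˣ) : SL(2, A) :=
  ⟨!![(u : A), 0; 0, ↑u⁻¹], by simp [det_fin_two_of]⟩

theorem diagUnit_coe (u : Aˣ) :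
    (diagUnit u : Matrix (Fin 2) (Fin 2) A) = !![(u : A), 0; 0, ↑u⁻¹] :=
  rfl

theorem diagUnit_inv (u : Aˣ) : (diagUnit u)⁻¹ = diagUnit u⁻¹ := by
  refine inv_eq_of_mul_eq_one_right (Subtype.ext ?_)
  simp [coe_mul, diagUnit_coe, one_fin_two]

theorem commutator_diagUnit_transvection_zero_one (u : Aˣ) (b : A) :
    ⁅diagUnit u, transvection (zero_ne_one' (Fin 2)) b⁆ =
      transvection (zero_ne_one' (Fin 2)) (((u : A) ^ 2 - 1) * b) := by
  rw [commutatorElement_def, diagUnit_inv, transvection_inv]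
  ext i j
  fin_cases i <;> fin_cases j <;>
    simp [coe_mul, diagUnit_coe, transvection_zero_one_coe]
  ring

theorem commutator_diagUnit_transvection_one_zero (u : Aˣ) (b : A) :
    ⁅diagUnit u⁻¹, transvection (one_ne_zero' (Fin 2)) b⁆ =
      transvection (one_ne_zero' (Fin 2)) (((u : A) ^ 2 - 1) * b) := by
  rw [commutatorElement_def, diagUnit_inv, transvection_inv]
  ext i j
  fin_cases i <;> fin_cases j <;>
    simp [coe_mul, diagUnit_coe, transvection_one_zero_coe]
  ring

theorem eq_transvection_mul_of_isUnit {g : SL(2, A)} (c : Aˣ) (hc : g 1 0 = c) :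
    g = transvection (zero_ne_one' (Fin 2)) ((g 0 0 - 1) * ↑c⁻¹) *
      transvection (one_ne_zero' (Fin 2)) (g 1 0) *
      transvection (zero_ne_one' (Fin 2)) ((g 1 1 - 1) * ↑c⁻¹) := by
  have hdet := det_fin_two_coe g
  rw [hc] at hdet
  have hcc : (c : A) * ↑c⁻¹ = 1 := c.mul_inv
  ext i j
  fin_cases i <;> fin_cases j <;>
    simp [coe_mul, transvection_zero_one_coe, transvection_one_zero_coe, hc]
  · linear_combination (-g 0 1) * hcc - ↑c⁻¹ * hdet
  · linear_combination (1 - g 1 1) * hcc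

theorem eq_top_of_transvection_mem [IsLocalRing A] {H : Subgroup SL(2, A)}
    (h01 : ∀ t, transvection (zero_ne_one' (Fin 2)) t ∈ H)
    (h10 : ∀ t, transvection (one_ne_zero' (Fin 2)) t ∈ H) : H = ⊤ := by
  have hunit : ∀ g : SL(2, A), IsUnit (g 1 0) → g ∈ H := by
    rintro g ⟨c, hc⟩
    rw [eq_transvection_mul_of_isUnit c hc.symm]
    exact mul_mem (mul_mem (h01 _) (h10 _)) (h01 _)
  refine eq_top_iff.2 fun g _ ↦ ?_
  by_cases hc : IsUnit (g 1 0)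
  · exact hunit g hc
  obtain ⟨a, ha⟩ : IsUnit (g 0 0) := by
    have hdet : IsUnit (g 0 0 * g 1 1 + -(g 0 1 * g 1 0)) := by
      rw [← sub_eq_add_neg, det_fin_two_coe]; exact isUnit_one
    refine (IsLocalRing.isUnit_or_isUnit_of_isUnit_add hdet).elim isUnit_of_mul_isUnit_left
      fun h ↦ absurd (isUnit_of_mul_isUnit_right (neg_neg (g 0 1 * g 1 0) ▸ h.neg)) hc
  set t := (1 - g 1 0) * ↑a⁻¹
  have hmem : transvection (one_ne_zero' (Fin 2)) t * g ∈ H := by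
    refine hunit _ ?_
    have : t * g 0 0 + g 1 0 = 1 := by
      rw [← ha]; linear_combination (1 - g 1 0) * a.inv_mul
    simp [coe_mul, transvection_one_zero_coe, mul_apply, Fin.sum_univ_two, this]
  simpa [← mul_assoc, ← transvection_add] using mul_mem (h10 (-t)) hmem

theorem isPerfect_of_isLocalRing [IsLocalRing A] (u : Aˣ) (hu : IsUnit ((u : A) ^ 2 - 1)) :
    Group.IsPerfect SL(2, A) := by
  rw [Group.isPerfect_def]
  apply eq_top_of_transvection_mem <;> intro t <;> obtain ⟨b, rfl⟩ := hu.dvd (a := t)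
  · rw [← commutator_diagUnit_transvection_zero_one]
    exact commutator_mem_commutator (mem_top _) (mem_top _)
  · rw [← commutator_diagUnit_transvection_one_zero]
    exact commutator_mem_commutator (mem_top _) (mem_top _)

theorem isPerfect_of_algebra {F : Type*} [Field F] [Algebra F A] [IsLocalRing A] {a : F}
    (ha : a ≠ 0) (ha' : a ^ 2 ≠ 1) : Group.IsPerfect SL(2, A) := by
  refine isPerfect_of_isLocalRing ((Units.mk0 a ha).map (algebraMap F A).toMonoidHom) ?_
  simpa using (isUnit_iff_ne_zero.2 (sub_ne_zero.2 ha')).map (algebraMap F A)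

theorem mem_center_iff_fin_two [NoZeroDivisors A] {g : SL(2, A)} :
    g ∈ center SL(2, A) ↔
      (g : Matrix (Fin 2) (Fin 2) A) = 1 ∨ (g : Matrix (Fin 2) (Fin 2) A) = -1 := by
  rw [mem_center_iff, Fintype.card_fin]
  constructor
  · rintro ⟨r, hr, hg⟩
    rcases sq_eq_one_iff.1 hr with rfl | rfl <;>
      simp only [← hg, map_neg, map_one, true_or, or_true]
  · rintro (hg | hg)
    · exact ⟨1, one_pow _, by rw [hg, map_one]⟩
    · exact ⟨-1, by norm_num, by rw [hg, map_neg, map_one]⟩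

end SL2

end Matrix.SpecialLinearGroup

theorem FiniteField.exists_ne_zero_sq_ne_one {F : Type*} [Field F] [Fintype F]
    (h : 3 < Fintype.card F) : ∃ a : F, a ≠ 0 ∧ a ^ 2 ≠ 1 := by
  classical
  by_contra! hF
  have : (Finset.univ : Finset F) ⊆ {0, 1, -1} := fun a _ ↦ by
    by_cases ha : a = 0
    · simp [ha]
    · rcases sq_eq_one_iff.1 (hF a ha) with rfl | rfl <;> simp
  have := (Finset.card_le_card this).trans Finset.card_le_three
  rw [Finset.card_univ] at this
  omega

theorem PowerSeries.ker_constantCoeff {R : Type*} [CommRing R] :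
    RingHom.ker (constantCoeff (R := R)) = Ideal.span {X} := by
  ext f
  rw [RingHom.mem_ker, Ideal.mem_span_singleton, X_dvd_iff]

open Matrix.SpecialLinearGroup

/-- For `R = F[[π]]`, `F` finite with `|F| > 3`, the only closed normal subgroup `N` of
`SL(2,R)` with simple quotient is `N = {A : A ≡ ±I mod π}`. -/
theorem stmt12 (F : Type*) [Field F] [Fintype F] (h : 3 < Fintype.card F)
    (N : Subgroup (Matrix.SpecialLinearGroup (Fin 2) (PowerSeries F))) [N.Normal]
    (hclosed : ∀ g : Matrix.SpecialLinearGroup (Fin 2) (PowerSeries F),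
      (∀ n : ℕ, ∃ h' ∈ N, ∀ i j : Fin 2,
        g.val i j - (h' : Matrix.SpecialLinearGroup (Fin 2) (PowerSeries F)).val i j ∈
          Ideal.span {(PowerSeries.X : PowerSeries F)} ^ n) → g ∈ N)
    (hsimple : IsSimpleGroup (Matrix.SpecialLinearGroup (Fin 2) (PowerSeries F) ⧸ N)) :
    ∀ A : Matrix.SpecialLinearGroup (Fin 2) (PowerSeries F),
      A ∈ N ↔ (A.val.map ((PowerSeries.constantCoeff (R := F))) = 1 ∨
        A.val.map ((PowerSeries.constantCoeff (R := F))) = -1) := by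
  obtain ⟨a, ha, ha'⟩ := FiniteField.exists_ne_zero_sq_ne_one h
  have : Group.IsPerfect SL(2, F) := ⟨SL2.commutator_eq_top ha ha'⟩
  have : Group.IsPerfect SL(2, PowerSeries F) := isPerfect_of_algebra ha ha'
  have : IsSimpleGroup (SL(2, F) ⧸ center SL(2, F)) :=
    ProjectiveSpecialLinearGroup.rank_two_simple (by rw [Nat.card_eq_fintype_card]; omega)
  let ρ := map (n := Fin 2) (PowerSeries.constantCoeff (R := F))
  have hker : ρ.ker = congruenceSubgroup (Ideal.span {PowerSeries.X}) := by
    rw [ker_map_eq_congruenceSubgroup, PowerSeries.ker_constantCoeff]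
  obtain ⟨k, hk⟩ := exists_congruenceSubgroup_pow_le _ hclosed
  have hle : (center SL(2, F)).comap ρ ≤ N :=
    le_of_commutator_le_congruenceSubgroup hk (hker ▸ commutator_comap_center_le_ker ρ)
  have hge : N ≤ (center SL(2, F)).comap ρ :=
    le_comap_center_of_ker_le (map_surjective_of_comp_eq_id PowerSeries.C (by ext; simp))
      (QuotientGroup.nontrivial_iff.1 inferInstance) ((ker_le_comap ρ _).trans hle)
  exact fun A ↦ ⟨fun hA ↦ mem_center_iff_fin_two.1 (hge hA),
    fun hA ↦ hle (mem_center_iff_fin_two.2 hA)⟩
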